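/- arXiv:1703.07483 — 2 statements merged into one kernel-verified Lean document; each statement's English description precedes it below -/
import Mathlib

section
/- Let μ be a probability measure on ℝ and for ε > 0 set s(μ,ε) := sup{μ([α,β]) : β − α ≤ ε}. Let J be a finite index set, μ^J the J-fold product measure on ℝ^J, and Φ a measurable function on ℝ^J which is monotone (nondecreasing in each coordinate) and satisfies Φ(q + te) − Φ(q) ≥ t for e = (1,1,…,1) ∈ ℝ^J and all t > 0. Then for any open interval I ⊆ ℝ, μ^J{ q : Φ(q) ∈ I } ≤ |J| · s(μ, |I|), where |J| is the cardinality of J and |I| the length of I. -/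
open scoped ENNReal
open MeasureTheory
noncomputable section

private lemma stollmann_upset_section {S : Set ℝ}
    (hS : ∀ ⦃x y : ℝ⦄, x ≤ y → x ∈ S → y ∈ S)
    {ε : ℝ} {t₀ : ℝ} (h₁ : t₀ ∈ S) (h₂ : t₀ - ε ∉ S) :
    {t : ℝ | t ∈ S ∧ t - ε ∉ S} ⊆ Set.Icc (sInf S) (sInf S + ε) := by
  have hne : S.Nonempty := ⟨t₀, h₁⟩
  have hlb : ∀ {r : ℝ}, r ∉ S → r ∈ lowerBounds S := by
    intro r hr x hx
    by_contra h
    exact hr (hS (le_of_not_ge h) hx)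
  have hbdd : BddBelow S := ⟨t₀ - ε, hlb h₂⟩
  rintro u ⟨hu₁, hu₂⟩
  refine ⟨csInf_le hbdd hu₁, ?_⟩
  have := le_csInf hne (hlb hu₂)
  linarith

private lemma stollmann_key {J : Type*} [Fintype J] [DecidableEq J]
    (μ : Measure ℝ) [IsProbabilityMeasure μ]
    {B : Set (J → ℝ)} (hB : MeasurableSet B)
    (hup : ∀ ⦃q q' : J → ℝ⦄, q ≤ q' → q ∈ B → q' ∈ B)
    (j : J) {ε : ℝ} {s : ℝ≥0∞}
    (hsec : ∀ c : ℝ, μ (Set.Icc c (c + ε)) ≤ s) :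
    (Measure.pi fun _ : J => μ)
      (B \ {q | (fun i => q i - if i = j then ε else 0) ∈ B}) ≤ s := by
  set sh : (J → ℝ) → (J → ℝ) := fun q i => q i - if i = j then ε else 0 with hsh
  have hshm : Measurable sh :=
    measurable_pi_lambda _ fun i => (measurable_pi_apply i).sub measurable_const
  have hDeq : {q : J → ℝ | (fun i => q i - if i = j then ε else 0) ∈ B} = sh ⁻¹' B := rfl
  rw [hDeq]
  set D := B \ sh ⁻¹' B with hDdef
  have hDm : MeasurableSet D := hB.diff (hshm hB)
  have hf : Measurable (D.indicator (1 : (J → ℝ) → ℝ≥0∞)) := measurable_const.indicator hDm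
  have h0 : (Measure.pi fun _ : J => μ) D
      = ∫⁻ q, D.indicator (1 : (J → ℝ) → ℝ≥0∞) q ∂(Measure.pi fun _ : J => μ) := by
    rw [lintegral_indicator_one hDm]
  have hinner : ∀ x : J → ℝ,
      (∫⁻ t, D.indicator (1 : (J → ℝ) → ℝ≥0∞) (Function.update x j t) ∂μ) ≤ s := by
    intro x
    set T : Set ℝ := {t | Function.update x j t ∈ D} with hT
    have hTm : MeasurableSet T := (measurable_update x) hDm
    have heq : ∀ t, D.indicator (1 : (J → ℝ) → ℝ≥0∞) (Function.update x j t)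
        = T.indicator (1 : ℝ → ℝ≥0∞) t := by
      intro t
      by_cases h : Function.update x j t ∈ D <;>
        simp [Set.indicator_apply, h, hT, Set.mem_setOf_eq]
    simp_rw [heq]
    rw [lintegral_indicator_one hTm]
    -- describe T via the up-set S
    set S : Set ℝ := {t | Function.update x j t ∈ B} with hSdef
    have hshup : ∀ t : ℝ, sh (Function.update x j t) = Function.update x j (t - ε) := by
      intro t
      funext i
      by_cases h : i = j
      · subst h; simp [hsh, Function.update]
      · simp [hsh, Function.update, h]
    have hTset : T = {t : ℝ | t ∈ S ∧ t - ε ∉ S} := by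
      ext t
      simp only [hT, hDdef, Set.mem_diff, Set.mem_setOf_eq, Set.mem_preimage, hSdef]
      rw [hshup t]
    have hSup : ∀ ⦃u v : ℝ⦄, u ≤ v → u ∈ S → v ∈ S := by
      intro u v huv hu
      refine hup ?_ hu
      intro i
      by_cases h : i = j
      · subst h; simp [Function.update, huv]
      · simp [Function.update, h]
    rcases Set.eq_empty_or_nonempty T with hTe | ⟨t₀, ht₀⟩
    · simp [hTe]
    · have ht₀' : t₀ ∈ S ∧ t₀ - ε ∉ S := by rwa [hTset] at ht₀
      have hsub : T ⊆ Set.Icc (sInf S) (sInf S + ε) := by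
        rw [hTset]
        exact stollmann_upset_section hSup ht₀'.1 ht₀'.2
      exact le_trans (measure_mono hsub) (hsec (sInf S))
  rw [h0, lintegral_eq_lmarginal_univ (fun _ : J => (0:ℝ)),
    lmarginal_erase' _ hf (Finset.mem_univ j)]
  refine le_trans (lmarginal_mono (g := fun _ => s) (fun x => hinner x) _) ?_
  simp [lmarginal, lintegral_const]

/-- **Stollmann's lemma** (Lemma 6.4, [Stollmann]).  Let `μ` be a probability measure on `ℝ` and
`s(μ,ε) = sup{μ([α,β]) : β − α ≤ ε}`.  If `Φ : ℝ^J → ℝ` (with `J` a finite index set) is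
monotone (nondecreasing in each coordinate), measurable, and satisfies
`Φ(q + t·e) − Φ(q) ≥ t` for `e = (1,…,1)` and all `t > 0`, then for every open interval
`I = (a,b)` one has `μ^J{q : Φ(q) ∈ I} ≤ |J| · s(μ, |I|)`. -/
theorem stollmann_lemma (μ : Measure ℝ) [IsProbabilityMeasure μ]
    (J : Type*) [Fintype J]
    (Φ : (J → ℝ) → ℝ) (hmono : Monotone Φ) (hmeas : Measurable Φ)
    (hdiag : ∀ (q : J → ℝ) (t : ℝ), 0 < t → Φ q + t ≤ Φ (q + fun _ => t))
    (a b : ℝ) :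
    (Measure.pi fun _ : J => μ) {q | Φ q ∈ Set.Ioo a b} ≤
      (Fintype.card J : ℝ≥0∞) * ⨆ (α : ℝ) (β : ℝ) (_ : β - α ≤ b - a), μ (Set.Icc α β) := by
  classical
  set s : ℝ≥0∞ := ⨆ (α : ℝ) (β : ℝ) (_ : β - α ≤ b - a), μ (Set.Icc α β) with hs
  rcases le_or_gt b a with hba | hab
  · have : Set.Ioo a b = ∅ := Set.Ioo_eq_empty (not_lt.mpr hba)
    simp [this]
  set ε : ℝ := b - a with hε
  have hε0 : 0 < ε := sub_pos.mpr hab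
  have hsec : ∀ c : ℝ, μ (Set.Icc c (c + ε)) ≤ s := by
    intro c
    refine le_iSup_of_le c (le_iSup_of_le (c + ε) (le_iSup_of_le ?_ le_rfl))
    simp [hε]
  set A : Set (J → ℝ) := Φ ⁻¹' Set.Ioi a with hA
  have hAmeas : MeasurableSet A := hmeas measurableSet_Ioi
  have hAup : ∀ ⦃q q' : J → ℝ⦄, q ≤ q' → q ∈ A → q' ∈ A := by
    intro q q' h hq
    exact lt_of_lt_of_le hq (hmono h)
  have hmain : ∀ S : Finset J,
      (Measure.pi fun _ : J => μ)
        (A \ {q | (fun i => q i - if i ∈ S then ε else 0) ∈ A}) ≤ (S.card : ℝ≥0∞) * s := by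
    intro S
    induction S using Finset.induction_on with
    | empty =>
      have h1 : ∀ q : J → ℝ,
          (fun i => q i - if i ∈ (∅ : Finset J) then ε else 0) = q := by
        intro q; funext i; simp
      have h2 : (A \ {q : J → ℝ | (fun i => q i - if i ∈ (∅ : Finset J) then ε else 0) ∈ A}) = ∅ := by
        ext q
        simp [h1 q]
      rw [h2]
      simp
    | @insert j S hj ih =>
      set B : Set (J → ℝ) := {q | (fun i => q i - if i ∈ S then ε else 0) ∈ A} with hB
      have hBmeas : MeasurableSet B := by
        have : Measurable fun (q : J → ℝ) (i : J) => q i - if i ∈ S then ε else 0 :=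
          measurable_pi_lambda _ fun i => (measurable_pi_apply i).sub measurable_const
        exact this hAmeas
      have hBup : ∀ ⦃q q' : J → ℝ⦄, q ≤ q' → q ∈ B → q' ∈ B := by
        intro q q' h hq
        refine hAup ?_ hq
        intro i
        exact sub_le_sub_right (h i) _
      have hins : {q : J → ℝ | (fun i => q i - if i ∈ insert j S then ε else 0) ∈ A}
          = {q : J → ℝ | (fun i => q i - if i = j then ε else 0) ∈ B} := by
        ext q
        simp only [Set.mem_setOf_eq, hB]
        have : (fun i => (fun i => q i - if i = j then ε else 0) i - if i ∈ S then ε else 0)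
            = fun i => q i - if i ∈ insert j S then ε else 0 := by
          funext i
          by_cases h : i = j
          · subst h; simp [hj]
          · simp [h, Finset.mem_insert, h]
        rw [this]
      have hsubset : {q : J → ℝ | (fun i => q i - if i ∈ insert j S then ε else 0) ∈ A} ⊆ B := by
        intro q hq
        refine hAup ?_ hq
        intro i
        refine sub_le_sub_left ?_ _
        by_cases h : i ∈ S
        · simp [h, Finset.mem_insert_of_mem h]
        · by_cases h' : i ∈ insert j S <;> simp [h, h', le_of_lt hε0]
      have hsplit : A \ {q : J → ℝ | (fun i => q i - if i ∈ insert j S then ε else 0) ∈ A}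
          ⊆ (A \ B) ∪ (B \ {q : J → ℝ | (fun i => q i - if i = j then ε else 0) ∈ B}) := by
        intro q hq
        rcases hq with ⟨hq₁, hq₂⟩
        rw [hins] at hq₂
        by_cases h : q ∈ B
        · exact Or.inr ⟨h, hq₂⟩
        · exact Or.inl ⟨hq₁, h⟩
      calc (Measure.pi fun _ : J => μ)
            (A \ {q : J → ℝ | (fun i => q i - if i ∈ insert j S then ε else 0) ∈ A})
          ≤ (Measure.pi fun _ : J => μ)
              ((A \ B) ∪ (B \ {q : J → ℝ | (fun i => q i - if i = j then ε else 0) ∈ B})) :=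
            measure_mono hsplit
        _ ≤ (Measure.pi fun _ : J => μ) (A \ B)
              + (Measure.pi fun _ : J => μ)
                (B \ {q : J → ℝ | (fun i => q i - if i = j then ε else 0) ∈ B}) :=
            measure_union_le _ _
        _ ≤ (S.card : ℝ≥0∞) * s + s := by
            exact add_le_add ih (stollmann_key μ hBmeas hBup j hsec)
        _ = ((insert j S).card : ℝ≥0∞) * s := by
            rw [Finset.card_insert_of_notMem hj]
            push_cast
            ring
  have hfinal : {q : J → ℝ | Φ q ∈ Set.Ioo a b}
      ⊆ A \ {q : J → ℝ | (fun i => q i - if i ∈ (Finset.univ : Finset J) then ε else 0) ∈ A} := by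
    intro q hq
    refine ⟨hq.1, ?_⟩
    intro hcon
    have h1 : ((fun i => q i - if i ∈ (Finset.univ : Finset J) then ε else 0) + fun _ => ε) = q := by
      funext i; simp
    have h2 := hdiag (fun i => q i - if i ∈ (Finset.univ : Finset J) then ε else 0) ε hε0
    rw [h1] at h2
    have h3 : a < Φ (fun i => q i - if i ∈ (Finset.univ : Finset J) then ε else 0) := hcon
    have h4 : Φ q < b := hq.2
    have : b < b := by
      calc b = a + ε := by simp [hε]
        _ < _ + ε := by linarith
        _ ≤ Φ q := h2
        _ < b := h4
    exact absurd this (lt_irrefl b)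
  calc (Measure.pi fun _ : J => μ) {q | Φ q ∈ Set.Ioo a b}
      ≤ (Measure.pi fun _ : J => μ)
          (A \ {q : J → ℝ | (fun i => q i - if i ∈ (Finset.univ : Finset J) then ε else 0) ∈ A}) :=
        measure_mono hfinal
    _ ≤ ((Finset.univ : Finset J).card : ℝ≥0∞) * s := hmain Finset.univ
    _ = (Fintype.card J : ℝ≥0∞) * s := by rw [Finset.card_univ]
end
end

section
/- For every N ∈ ℕ and every x ∈ 𝒳_N, the number of nearest neighbors of x in 𝒳_N equals twice the number of clusters of x; that is, #{w ∈ 𝒳_N : |x−w| = 1} = 2 W̃(x). Consequently, for any subgraph G = (𝒱, ℰ) of 𝒳_N and any x ∈ 𝒱, #{w ∈ 𝒱 : ⟨x,w⟩ ∈ ℰ} ≤ 2 W̃(x). -/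
open scoped ENNReal ComplexOrder
open MeasureTheory
attribute [local instance] Classical.propDecidable Classical.decEq
noncomputable section

/-- A configuration of `N` ordered particles on `ℤ`. -/
abbrev Conf (N : ℕ) := Fin N → ℤ

/-- The vertex set `𝒳_N = {x ∈ ℤ^N : x_1 < x_2 < … < x_N}`. -/
def XV (N : ℕ) : Type := {x : Conf N // StrictMono x}

/-- `ℓ²(𝒳_N)`. -/
abbrev LP (N : ℕ) := lp (fun _ : XV N => ℂ) 2

/-- Bounded operators on `ℓ²(𝒳_N)`. -/
abbrev Op (N : ℕ) := LP N →L[ℂ] LP N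

/-- The `1`-distance `|x−y| = ∑ᵢ |xᵢ−yᵢ|`. -/
def d1 {N : ℕ} (x y : Conf N) : ℕ := ∑ i, (x i - y i).natAbs

/-- The `∞`-distance `‖x−y‖ = maxᵢ |xᵢ−yᵢ|`. -/
def dInf {N : ℕ} (x y : Conf N) : ℕ := Finset.univ.sup fun i => (x i - y i).natAbs

/-- The cluster-counting function `W̃(x) = 1 + #{j : x_{j+1} ≠ x_j + 1}`. -/
def Wt {N : ℕ} (x : Conf N) : ℕ :=
  1 + (Finset.univ.filter fun p : Fin N × Fin N =>
        (p.2 : ℕ) = (p.1 : ℕ) + 1 ∧ x p.2 ≠ x p.1 + 1).card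

/-- Membership in the edge `𝒳_{N,1} = {(a, a+1, …, a+N−1)}`. -/
def IsEdgePt {N : ℕ} (x : Conf N) : Prop := ∀ i j : Fin N, x j - x i = (j : ℤ) - (i : ℤ)

/-- Move particle `i` by `e`. -/
def move {N : ℕ} (x : Conf N) (i : Fin N) (e : ℤ) : Conf N := Function.update x i (x i + e)

/-- `E` is the (symmetric) edge set of a subgraph of `𝒳_N` with vertex set `V`. -/
def IsSubgraph {N : ℕ} (V : Set (XV N)) (E : Set (XV N × XV N)) : Prop :=
  ∀ p ∈ E, p.1 ∈ V ∧ p.2 ∈ V ∧ d1 p.1.1 p.2.1 = 1 ∧ (p.2, p.1) ∈ E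

/-- Action of the graph Laplacian `ℒ^{(G)}` (of the graph with edge set `E`) on functions:
`(ℒψ)(x) = ∑_{⟨y,x⟩ ∈ E} (ψ(y) − ψ(x))`. -/
def lapApply {N : ℕ} (E : Set (XV N × XV N)) (ψ : XV N → ℂ) (x : XV N) : ℂ :=
  ∑ i : Fin N, ∑ e ∈ ({-1, 1} : Finset ℤ),
    if h : ∃ hm : StrictMono (move x.1 i e), ((⟨move x.1 i e, hm⟩ : XV N), x) ∈ E
    then ψ ⟨move x.1 i e, h.choose⟩ - ψ x else 0

/-- The random potential `V_ω(x) = ∑ⱼ ω_{xⱼ}`. -/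
def VPot {N : ℕ} (ω : ℤ → ℝ) (x : XV N) : ℝ := ∑ i, ω (x.1 i)

/-- Pointwise action of `H_N^{(G)} = −(1/(2Δ))ℒ^{(G)} + (1−1/Δ)W̃ + pot` on the vertex set `V`. -/
def hamApply {N : ℕ} (Δ : ℝ) (V : Set (XV N)) (E : Set (XV N × XV N))
    (pot : XV N → ℝ) (ψ : XV N → ℂ) (x : XV N) : ℂ :=
  if x ∈ V then
    -(1 / (2 * Δ)) * lapApply E ψ x
      + (((1 - 1 / Δ) * Wt x.1 + pot x : ℝ) : ℂ) * ψ x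
  else 0

/-- `H` is the bounded operator acting by `hamApply`. -/
def IsHam {N : ℕ} (Δ : ℝ) (V : Set (XV N)) (E : Set (XV N × XV N))
    (pot : XV N → ℝ) (H : Op N) : Prop :=
  ∀ ψ : LP N, ∀ x, H ψ x = hamApply Δ V E pot (⇑ψ) x

/-- `R` is the inverse of (the restriction to `ℓ²(V)` of) `H − z`, extended by `0`. -/
def IsResOn {N : ℕ} (H R : Op N) (z : ℂ) (V : Set (XV N)) : Prop :=
  (∀ ψ : LP N, ∀ x, x ∉ V → R ψ x = 0) ∧
  (∀ ψ φ : LP N, (∀ x ∈ V, ψ x = φ x) → R ψ = R φ) ∧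
  (∀ ψ : LP N, (∀ x, x ∉ V → ψ x = 0) → (H - z • 1) (R ψ) = ψ ∧ R ((H - z • 1) ψ) = ψ)

/-- `T` is the operator of multiplication by `f`. -/
def IsMulOp {N : ℕ} (f : XV N → ℂ) (T : Op N) : Prop := ∀ ψ : LP N, ∀ x, T ψ x = f x * ψ x

/-- indicator function of `A`. -/
def chi {N : ℕ} (A : Set (XV N)) : XV N → ℂ := fun x => if x ∈ A then 1 else 0

/-- `W̃^{1/2}`. -/
def sqW {N : ℕ} : XV N → ℂ := fun x => (Real.sqrt (Wt x.1) : ℂ)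

/-- The edge `𝒳_{N,1}`. -/
def edgeSet (N : ℕ) : Set (XV N) := {x | IsEdgePt x.1}

/-- The bulk `𝒳̄_{N,k} = {x : W̃(x) > k}`. -/
def bulkSet (N k : ℕ) : Set (XV N) := {x | k < Wt x.1}

/-- The finite volume `𝒳_N^{(L)}`. -/
def XL (N L : ℕ) : Set (XV N) := {x | ∀ i, -(L : ℤ) ≤ x.1 i ∧ x.1 i ≤ L}

/-- All edges of `𝒳_N` between vertices of `V` (induced subgraph). -/
def fullE {N : ℕ} (V : Set (XV N)) : Set (XV N × XV N) :=
  {p | p.1 ∈ V ∧ p.2 ∈ V ∧ d1 p.1.1 p.2.1 = 1}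

/-- The boundary term `(β − (1/2)(1−1/Δ)) χ^{(L)}`. -/
def bdry (N L : ℕ) (Δ β : ℝ) : XV N → ℝ := fun x =>
  (β - (1 / 2) * (1 - 1 / Δ)) *
    ((if ∃ i, x.1 i = -(L : ℤ) then 1 else 0) + (if ∃ i, x.1 i = (L : ℤ) then 1 else 0))

/-- Pointwise action of the restriction `χ_S H χ_S` of the Hamiltonian to `ℓ²(S)`. -/
def restHamApply {N : ℕ} (Δ : ℝ) (V : Set (XV N)) (E : Set (XV N × XV N))
    (pot : XV N → ℝ) (S : Set (XV N)) (ψ : XV N → ℂ) (x : XV N) : ℂ :=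
  if x ∈ S then hamApply Δ V E pot (fun v => if v ∈ S then ψ v else 0) x else 0

/-- The droplet interval `I_{1,δ}`. -/
def I1 (Δ δ : ℝ) : Set ℝ := Set.Icc (1 - 1 / Δ) ((2 - δ) * (1 - 1 / Δ))

/-- The `k`-droplet interval `I_{k,δ}`. -/
def Ik (Δ δ : ℝ) (k : ℕ) : Set ℝ := Set.Icc (1 - 1 / Δ) ((k + 1 - δ) * (1 - 1 / Δ))

/-- The edge point `(a, a+1, …, a+N−1) ∈ 𝒳_{N,1}`. -/
def edgePt (N : ℕ) (a : ℤ) : XV N :=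
  ⟨fun i => a + (i : ℤ), by
    intro i j h
    have : (i : ℤ) < (j : ℤ) := by exact_mod_cast h
    show a + (i : ℤ) < a + (j : ℤ)
    omega⟩

section StmtAux

variable {N : ℕ}

lemma move_apply_self (x : Conf N) (i : Fin N) (e : ℤ) : move x i e i = x i + e :=
  Function.update_self ..

lemma move_apply_ne (x : Conf N) {i j : Fin N} (e : ℤ) (h : j ≠ i) : move x i e j = x j :=
  Function.update_of_ne h _ _

lemma d1_move (x : Conf N) (i : Fin N) (e : ℤ) : d1 x (move x i e) = e.natAbs := by
  unfold d1
  rw [Finset.sum_eq_single i]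
  · rw [move_apply_self]; omega
  · intro j _ hj; rw [move_apply_ne x e hj]; omega
  · simp

lemma d1_eq_one_iff (x c : Conf N) :
    d1 x c = 1 ↔ ∃ i : Fin N, ∃ e : ℤ, (e = 1 ∨ e = -1) ∧ c = move x i e := by
  constructor
  · intro h
    have h' : ∑ j, (x j - c j).natAbs = 1 := h
    have hex : ∃ i : Fin N, (x i - c i).natAbs ≠ 0 := by
      by_contra hc
      push_neg at hc
      rw [Finset.sum_eq_zero (fun j _ => hc j)] at h'
      omega
    obtain ⟨i, hi⟩ := hex
    have hsum : (x i - c i).natAbs + ∑ j ∈ Finset.univ.erase i, (x j - c j).natAbs = 1 :=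
      (Finset.add_sum_erase Finset.univ (fun j => (x j - c j).natAbs)
        (Finset.mem_univ i)).trans h'
    have h1 : (x i - c i).natAbs = 1 := by omega
    have h0 : ∑ j ∈ Finset.univ.erase i, (x j - c j).natAbs = 0 := by omega
    have hothers : ∀ j : Fin N, j ≠ i → c j = x j := by
      intro j hj
      have := (Finset.sum_eq_zero_iff.mp h0) j (by simp [hj])
      omega
    refine ⟨i, c i - x i, by omega, funext fun j => ?_⟩
    by_cases hj : j = i
    · subst hj; rw [move_apply_self]; ring
    · rw [move_apply_ne _ _ hj, hothers j hj]
  · rintro ⟨i, e, he, rfl⟩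
    rw [d1_move]
    rcases he with rfl | rfl <;> rfl

lemma sm_move_one {x : Conf N} (hx : StrictMono x) (i : Fin N) :
    StrictMono (move x i 1) ↔ ∀ j : Fin N, (j : ℕ) = (i : ℕ) + 1 → x j ≠ x i + 1 := by
  constructor
  · intro hm j hj hxj
    have hij : i < j := by rw [Fin.lt_def]; omega
    have hji : j ≠ i := by intro h; rw [h] at hj; omega
    have := hm hij
    rw [move_apply_self, move_apply_ne _ _ hji, hxj] at this
    exact lt_irrefl _ this
  · intro hgap a b hab
    by_cases hbi : b = i
    · have hab2 : a < i := hbi ▸ hab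
      rw [hbi, move_apply_ne _ _ (ne_of_lt hab2), move_apply_self]
      have := hx hab2
      omega
    · rw [move_apply_ne _ _ hbi]
      by_cases hai : a = i
      · rw [hai, move_apply_self]
        have hab2 : i < b := hai ▸ hab
        have hab' : (i : ℕ) < (b : ℕ) := hab2
        have hb : (i : ℕ) + 1 < N := lt_of_le_of_lt hab' b.isLt
        have hja : x ⟨(i : ℕ) + 1, hb⟩ ≠ x i + 1 := hgap _ rfl
        have hj1 : x i < x ⟨(i : ℕ) + 1, hb⟩ := hx (by simp [Fin.lt_def])
        have hjb : x ⟨(i : ℕ) + 1, hb⟩ ≤ x b := hx.monotone (by rw [Fin.le_def]; exact hab')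
        omega
      · rw [move_apply_ne _ _ hai]
        exact hx hab

lemma sm_move_neg {x : Conf N} (hx : StrictMono x) (i : Fin N) :
    StrictMono (move x i (-1)) ↔ ∀ j : Fin N, (i : ℕ) = (j : ℕ) + 1 → x i ≠ x j + 1 := by
  constructor
  · intro hm j hj hxj
    have hij : j < i := by rw [Fin.lt_def]; omega
    have hji : j ≠ i := by intro h; rw [h] at hj; omega
    have := hm hij
    rw [move_apply_self, move_apply_ne _ _ hji] at this
    omega
  · intro hgap a b hab
    by_cases hai : a = i
    · have hab2 : i < b := hai ▸ hab
      rw [hai, move_apply_ne _ _ (ne_of_lt hab2).symm, move_apply_self]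
      have := hx hab2
      omega
    · rw [move_apply_ne _ _ hai]
      by_cases hbi : b = i
      · rw [hbi, move_apply_self]
        have hab2 : a < i := hbi ▸ hab
        have hab' : (a : ℕ) < (i : ℕ) := hab2
        have hb : (i : ℕ) - 1 < N := lt_of_le_of_lt (by omega) i.isLt
        have hjb : x i ≠ x ⟨(i : ℕ) - 1, hb⟩ + 1 := hgap _ (by simp; omega)
        have hj1 : x ⟨(i : ℕ) - 1, hb⟩ < x i := hx (by rw [Fin.lt_def]; simp; omega)
        have haj : x a ≤ x ⟨(i : ℕ) - 1, hb⟩ := hx.monotone (by rw [Fin.le_def]; simp; omega)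
        omega
      · rw [move_apply_ne _ _ hbi]
        exact hx hab

lemma card_moves_one {x : Conf N} (hx : StrictMono x) (hN : 0 < N) :
    (Finset.univ.filter fun i : Fin N => StrictMono (move x i 1)).card = Wt x := by
  classical
  set G := (Finset.univ.filter fun p : Fin N × Fin N =>
      (p.2 : ℕ) = (p.1 : ℕ) + 1 ∧ x p.2 ≠ x p.1 + 1) with hG
  set lastI : Fin N := ⟨N - 1, by omega⟩ with hlast
  have hmemG : ∀ p : Fin N × Fin N, p ∈ G ↔ (p.2 : ℕ) = (p.1 : ℕ) + 1 ∧ x p.2 ≠ x p.1 + 1 := by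
    intro p; simp [hG]
  have hset : (Finset.univ.filter fun i : Fin N => StrictMono (move x i 1))
      = insert lastI (G.image Prod.fst) := by
    ext i
    simp only [Finset.mem_filter, Finset.mem_univ, true_and, Finset.mem_insert,
      Finset.mem_image, sm_move_one hx]
    constructor
    · intro h
      by_cases hL : (i : ℕ) = N - 1
      · exact Or.inl (Fin.ext (by simp [hlast, hL]))
      · right
        have hi1 : (i : ℕ) + 1 < N := by have := i.isLt; omega
        exact ⟨(i, ⟨(i : ℕ) + 1, hi1⟩), (hmemG _).mpr ⟨rfl, h _ rfl⟩, rfl⟩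
    · rintro (rfl | ⟨p, hp, rfl⟩)
      · intro j hj _
        have := j.isLt
        simp [hlast] at hj
        omega
      · intro j hj
        obtain ⟨h1, h2⟩ := (hmemG p).mp hp
        have : j = p.2 := Fin.ext (by omega)
        rw [this]; exact h2
  have hnot : lastI ∉ G.image Prod.fst := by
    rintro hmem
    obtain ⟨p, hp, hfst⟩ := Finset.mem_image.mp hmem
    obtain ⟨h1, _⟩ := (hmemG p).mp hp
    have h2 := p.2.isLt
    have h3 : (p.1 : ℕ) = N - 1 := by rw [hfst]
    omega
  have hinj : Set.InjOn Prod.fst (G : Set (Fin N × Fin N)) := by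
    intro p hp q hq h
    obtain ⟨h1, _⟩ := (hmemG p).mp (by exact_mod_cast hp)
    obtain ⟨h2, _⟩ := (hmemG q).mp (by exact_mod_cast hq)
    exact Prod.ext h (Fin.ext (by rw [h1, h2, h]))
  rw [hset, Finset.card_insert_of_notMem hnot, Finset.card_image_of_injOn hinj]
  show G.card + 1 = Wt x
  rw [Wt, ← hG]
  omega

lemma card_moves_neg {x : Conf N} (hx : StrictMono x) (hN : 0 < N) :
    (Finset.univ.filter fun i : Fin N => StrictMono (move x i (-1))).card = Wt x := by
  classical
  set G := (Finset.univ.filter fun p : Fin N × Fin N =>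
      (p.2 : ℕ) = (p.1 : ℕ) + 1 ∧ x p.2 ≠ x p.1 + 1) with hG
  set firstI : Fin N := ⟨0, hN⟩ with hfirst
  have hmemG : ∀ p : Fin N × Fin N, p ∈ G ↔ (p.2 : ℕ) = (p.1 : ℕ) + 1 ∧ x p.2 ≠ x p.1 + 1 := by
    intro p; simp [hG]
  have hset : (Finset.univ.filter fun i : Fin N => StrictMono (move x i (-1)))
      = insert firstI (G.image Prod.snd) := by
    ext i
    simp only [Finset.mem_filter, Finset.mem_univ, true_and, Finset.mem_insert,
      Finset.mem_image, sm_move_neg hx]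
    constructor
    · intro h
      by_cases hL : (i : ℕ) = 0
      · exact Or.inl (Fin.ext (by simp [hfirst, hL]))
      · right
        exact ⟨(⟨(i : ℕ) - 1, by have := i.isLt; omega⟩, i),
          (hmemG _).mpr ⟨by simp; omega, h _ (by simp; omega)⟩, rfl⟩
    · rintro (rfl | ⟨p, hp, rfl⟩)
      · intro j hj _
        simp [hfirst] at hj
      · intro j hj
        obtain ⟨h1, h2⟩ := (hmemG p).mp hp
        have : j = p.1 := Fin.ext (by omega)
        rw [this]; exact h2
  have hnot : firstI ∉ G.image Prod.snd := by
    rintro hmem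
    obtain ⟨p, hp, hsnd⟩ := Finset.mem_image.mp hmem
    obtain ⟨h1, _⟩ := (hmemG p).mp hp
    have : (p.2 : ℕ) = 0 := by rw [hsnd]
    omega
  have hinj : Set.InjOn Prod.snd (G : Set (Fin N × Fin N)) := by
    intro p hp q hq h
    obtain ⟨h1, _⟩ := (hmemG p).mp (by exact_mod_cast hp)
    obtain ⟨h2, _⟩ := (hmemG q).mp (by exact_mod_cast hq)
    exact Prod.ext (Fin.ext (by omega)) h
  rw [hset, Finset.card_insert_of_notMem hnot, Finset.card_image_of_injOn hinj]
  show G.card + 1 = Wt x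
  rw [Wt, ← hG]
  omega

end StmtAux

/-- Every `x ∈ 𝒳_N` has exactly `2 W̃(x)` nearest neighbors in `𝒳_N`;
consequently, in any subgraph `G = (𝒱, ℰ)` of `𝒳_N`, every vertex has at most `2 W̃(x)`
neighbors. -/
theorem nearest_neighbors_eq_two_mul_clusters :
    ∀ (N : ℕ), 0 < N → ∀ x : XV N,
      ({w : XV N | d1 x.1 w.1 = 1}).ncard = 2 * Wt x.1 ∧
      ∀ (V : Set (XV N)) (E : Set (XV N × XV N)), IsSubgraph V E → x ∈ V →
        ({w : XV N | (x, w) ∈ E}).ncard ≤ 2 * Wt x.1 := by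
  intro N hN x
  classical
  set S1 := Finset.univ.filter (fun i : Fin N => StrictMono (move x.1 i 1)) with hS1
  set S2 := Finset.univ.filter (fun i : Fin N => StrictMono (move x.1 i (-1))) with hS2
  set T : Finset (Fin N × ℤ) :=
    (S1.image fun i => (i, (1 : ℤ))) ∪ (S2.image fun i => (i, (-1 : ℤ))) with hT
  set F : Fin N × ℤ → Conf N := fun p => move x.1 p.1 p.2 with hF
  have hvalinj : Function.Injective (fun w : XV N => w.1) := fun a b hab => Subtype.ext hab
  have hval : (fun w : XV N => w.1) '' {w : XV N | d1 x.1 w.1 = 1}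
      = {c : Conf N | StrictMono c ∧ d1 x.1 c = 1} := by
    ext c
    constructor
    · rintro ⟨w, hw, rfl⟩
      exact ⟨w.2, hw⟩
    · rintro ⟨hsm, hd⟩
      exact ⟨⟨c, hsm⟩, hd, rfl⟩
  have hAT : {c : Conf N | StrictMono c ∧ d1 x.1 c = 1} = F '' (T : Set (Fin N × ℤ)) := by
    ext c
    constructor
    · rintro ⟨hsm, hd⟩
      obtain ⟨i, e, he, rfl⟩ := (d1_eq_one_iff x.1 c).mp hd
      refine ⟨(i, e), ?_, rfl⟩
      rw [hT]
      rcases he with rfl | rfl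
      · exact Finset.mem_coe.mpr (Finset.mem_union_left _
          (Finset.mem_image.mpr ⟨i, by rw [hS1, Finset.mem_filter]; exact ⟨Finset.mem_univ i, hsm⟩, rfl⟩))
      · exact Finset.mem_coe.mpr (Finset.mem_union_right _
          (Finset.mem_image.mpr ⟨i, by rw [hS2, Finset.mem_filter]; exact ⟨Finset.mem_univ i, hsm⟩, rfl⟩))
    · rintro ⟨p, hp, rfl⟩
      have hp' := Finset.mem_coe.mp hp
      rw [hT, Finset.mem_union] at hp'
      rcases hp' with hp' | hp'
      · obtain ⟨i, hi, rfl⟩ := Finset.mem_image.mp hp'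
        rw [hS1, Finset.mem_filter] at hi
        exact ⟨hi.2, (d1_eq_one_iff _ _).mpr ⟨i, 1, Or.inl rfl, rfl⟩⟩
      · obtain ⟨i, hi, rfl⟩ := Finset.mem_image.mp hp'
        rw [hS2, Finset.mem_filter] at hi
        exact ⟨hi.2, (d1_eq_one_iff _ _).mpr ⟨i, -1, Or.inr rfl, rfl⟩⟩
  have hFinj : Set.InjOn F (T : Set (Fin N × ℤ)) := by
    have hT2 : ∀ p ∈ T, p.2 = (1 : ℤ) ∨ p.2 = -1 := by
      intro p hp
      rw [hT, Finset.mem_union] at hp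
      rcases hp with hp | hp <;> obtain ⟨i, _, rfl⟩ := Finset.mem_image.mp hp
      · exact Or.inl rfl
      · exact Or.inr rfl
    intro p hp q hq h
    have hp2 := hT2 p (Finset.mem_coe.mp hp)
    have hq2 := hT2 q (Finset.mem_coe.mp hq)
    have hij : p.1 = q.1 := by
      by_contra hne
      have h1 := congrFun h p.1
      simp only [hF] at h1
      rw [move_apply_self, move_apply_ne _ _ hne] at h1
      omega
    have heq : p.2 = q.2 := by
      have h1 := congrFun h p.1
      simp only [hF] at h1
      rw [move_apply_self, hij, move_apply_self] at h1
      omega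
    exact Prod.ext hij heq
  have hcard : ({w : XV N | d1 x.1 w.1 = 1}).ncard = 2 * Wt x.1 := by
    have h1 : ({w : XV N | d1 x.1 w.1 = 1}).ncard
        = ((fun w : XV N => w.1) '' {w : XV N | d1 x.1 w.1 = 1}).ncard :=
      (Set.ncard_image_of_injective _ hvalinj).symm
    rw [h1, hval, hAT, Set.ncard_image_of_injOn hFinj, Set.ncard_coe_finset]
    have hdisj : Disjoint (S1.image fun i => (i, (1 : ℤ))) (S2.image fun i => (i, (-1 : ℤ))) := by
      rw [Finset.disjoint_left]
      rintro p hp1 hp2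
      obtain ⟨i, _, rfl⟩ := Finset.mem_image.mp hp1
      obtain ⟨j, _, hj⟩ := Finset.mem_image.mp hp2
      have := congrArg Prod.snd hj
      simp at this
    have hinj1 : Function.Injective (fun i : Fin N => (i, (1 : ℤ))) :=
      fun a b hab => (Prod.ext_iff.mp hab).1
    have hinj2 : Function.Injective (fun i : Fin N => (i, (-1 : ℤ))) :=
      fun a b hab => (Prod.ext_iff.mp hab).1
    rw [hT, Finset.card_union_of_disjoint hdisj, Finset.card_image_of_injective _ hinj1,
      Finset.card_image_of_injective _ hinj2, hS1, hS2,
      card_moves_one x.2 hN, card_moves_neg x.2 hN]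
    omega
  have hfin : ({w : XV N | d1 x.1 w.1 = 1}).Finite := by
    have himfin : ((fun w : XV N => w.1) '' {w : XV N | d1 x.1 w.1 = 1}).Finite := by
      rw [hval, hAT]
      exact T.finite_toSet.image F
    exact Set.Finite.of_finite_image himfin (Function.Injective.injOn hvalinj)
  refine ⟨hcard, ?_⟩
  intro V E hsub hxV
  have hss : {w : XV N | (x, w) ∈ E} ⊆ {w : XV N | d1 x.1 w.1 = 1} :=
    fun w hw => (hsub _ hw).2.2.1
  calc ({w : XV N | (x, w) ∈ E}).ncard ≤ ({w : XV N | d1 x.1 w.1 = 1}).ncard :=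
        Set.ncard_le_ncard hss hfin
    _ = 2 * Wt x.1 := hcard
end
end
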